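/- arXiv:2112.11871 — 2 statements merged into one kernel-verified Lean document; each statement's English description precedes it below -/
import Mathlib

section
/- Let f : I → ℝ be a strictly monotone twice continuously differentiable function with nowhere vanishing first derivative and let p, q : I → ℝ_+^n be continuous, with n ≥ 2. Then the following conditions are pairwise equivalent: (i) A_{f,p} is globally smaller than A_{f,q}; (ii) A_{f,p} is locally smaller than A_{f,q}; (iii) p_i/p_0 = q_i/q_0 on I for every i ∈ {1,…,n} and the function q_0/p_0 is increasing on I. -/
open Set Function Real Filter Topology

/-- The `n`-variable generalized Bajraktarević mean `A_{f,p}` on the interval `I`: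
`A_{f,p}(x) = f⁻¹((∑ pᵢ(xᵢ) f(xᵢ)) / (∑ pᵢ(xᵢ)))`. -/
noncomputable def bajMean {n : ℕ} (I : Set ℝ) (f : ℝ → ℝ) (p : Fin n → ℝ → ℝ)
    (x : Fin n → ℝ) : ℝ :=
  Function.invFunOn f I ((∑ i, p i (x i) * f (x i)) / (∑ i, p i (x i)))

/-- The `i`-th first-order partial derivative of `Φ : Iⁿ → ℝ`. -/
noncomputable def pder {n : ℕ} (Φ : (Fin n → ℝ) → ℝ) (i : Fin n) (y : Fin n → ℝ) : ℝ :=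
  deriv (fun t => Φ (Function.update y i t)) (y i)

/-- The second-order partial derivative `∂ᵢ∂ⱼΦ`. -/
noncomputable def pder2 {n : ℕ} (Φ : (Fin n → ℝ) → ℝ) (i j : Fin n) :
    (Fin n → ℝ) → ℝ :=
  pder (pder Φ j) i

/-- `M` is locally smaller than `N`: there is an open set `U ⊆ Iⁿ` containing the
diagonal of `Iⁿ` on which `M ≤ N`. -/
def LocallySmaller {n : ℕ} (I : Set ℝ) (M N : (Fin n → ℝ) → ℝ) : Prop :=
  ∃ U : Set (Fin n → ℝ), IsOpen U ∧ U ⊆ {x | ∀ i, x i ∈ I} ∧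
    (∀ x ∈ I, (fun _ => x) ∈ U) ∧ ∀ x ∈ U, M x ≤ N x

/- auxiliary lemmas -/

lemma cheb_id {n : ℕ} (w a r : Fin n → ℝ) :
    (∑ i, w i) * (∑ i, w i * r i * a i) - (∑ i, w i * a i) * (∑ i, w i * r i)
      = (∑ i, ∑ j, (w i * w j) * ((a i - a j) * (r i - r j))) / 2 := by
  have key : ∀ i : Fin n, ∀ j : Fin n, (w i * w j) * ((a i - a j) * (r i - r j))
      = w i * (w j * r j * a j) + (w i * a i * r i) * w j
        - (w i * a i) * (w j * r j) - (w i * r i) * (w j * a j) := by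
    intro i j; ring
  simp only [key, Finset.sum_sub_distrib, Finset.sum_add_distrib,
    ← Finset.mul_sum, ← Finset.sum_mul]
  rw [show (∑ i, w i * a i * r i) = ∑ i, w i * r i * a i from
    Finset.sum_congr rfl fun i _ => by ring]
  ring

lemma cheb_le {n : ℕ} (hn : 0 < n) (w a r : Fin n → ℝ) (hw : ∀ i, 0 < w i)
    (hr : ∀ i, 0 < r i) (hmono : ∀ i j, 0 ≤ (a i - a j) * (r i - r j)) :
    (∑ i, w i * a i) / (∑ i, w i) ≤ (∑ i, w i * r i * a i) / (∑ i, w i * r i) := by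
  have hne : (Finset.univ : Finset (Fin n)).Nonempty := by
    simpa [Finset.univ_nonempty_iff, Fin.pos_iff_nonempty] using hn
  have hW : 0 < ∑ i, w i := Finset.sum_pos (fun i _ => hw i) hne
  have hWr : 0 < ∑ i, w i * r i :=
    Finset.sum_pos (fun i _ => mul_pos (hw i) (hr i)) hne
  rw [div_le_div_iff₀ hW hWr]
  nlinarith [cheb_id w a r, Finset.sum_nonneg (fun i (_ : i ∈ Finset.univ) =>
    Finset.sum_nonneg (fun j (_ : j ∈ Finset.univ) =>
      mul_nonneg (mul_nonneg (hw i).le (hw j).le) (hmono i j)))]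

lemma bajMean_spec {n : ℕ} (hn : 0 < n) {I : Set ℝ} (hIconn : I.OrdConnected)
    {f : ℝ → ℝ} (hfc : ContinuousOn f I) {p : Fin n → ℝ → ℝ}
    (hp : ∀ i, ∀ x ∈ I, 0 < p i x) {x : Fin n → ℝ} (hx : ∀ i, x i ∈ I) :
    bajMean I f p x ∈ I ∧
      f (bajMean I f p x) = (∑ i, p i (x i) * f (x i)) / (∑ i, p i (x i)) := by
  set c := (∑ i, p i (x i) * f (x i)) / (∑ i, p i (x i)) with hc
  have hne : (Finset.univ : Finset (Fin n)).Nonempty := by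
    simpa [Finset.univ_nonempty_iff, Fin.pos_iff_nonempty] using hn
  have hW : 0 < ∑ i, p i (x i) := Finset.sum_pos (fun i _ => hp i _ (hx i)) hne
  obtain ⟨i0, -, hi0⟩ := Finset.exists_min_image Finset.univ (fun i => f (x i)) hne
  obtain ⟨i1, -, hi1⟩ := Finset.exists_max_image Finset.univ (fun i => f (x i)) hne
  have hlo : f (x i0) ≤ c := by
    rw [hc, le_div_iff₀ hW]
    calc f (x i0) * ∑ i, p i (x i) = ∑ i, p i (x i) * f (x i0) := by
          rw [Finset.mul_sum]; exact Finset.sum_congr rfl fun i _ => by ring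
      _ ≤ ∑ i, p i (x i) * f (x i) :=
          Finset.sum_le_sum fun i _ =>
            mul_le_mul_of_nonneg_left (hi0 i (Finset.mem_univ i)) (hp i _ (hx i)).le
  have hhi : c ≤ f (x i1) := by
    rw [hc, div_le_iff₀ hW]
    calc (∑ i, p i (x i) * f (x i)) ≤ ∑ i, p i (x i) * f (x i1) :=
          Finset.sum_le_sum fun i _ =>
            mul_le_mul_of_nonneg_left (hi1 i (Finset.mem_univ i)) (hp i _ (hx i)).le
      _ = f (x i1) * ∑ i, p i (x i) := by
          rw [Finset.mul_sum]; exact Finset.sum_congr rfl fun i _ => by ring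
  have himg : OrdConnected (f '' I) :=
    ((hIconn.isPreconnected).image f hfc).ordConnected
  have hcmem : c ∈ f '' I :=
    himg.out (mem_image_of_mem f (hx i0)) (mem_image_of_mem f (hx i1)) ⟨hlo, hhi⟩
  obtain ⟨u, hu, hfu⟩ := hcmem
  exact ⟨Function.invFunOn_mem ⟨u, hu, hfu⟩, Function.invFunOn_eq ⟨u, hu, hfu⟩⟩

lemma mono_of_local {I : Set ℝ} (hIconn : I.OrdConnected) {r : ℝ → ℝ}
    (hrc : ContinuousOn r I)
    (h : ∀ t ∈ I, ∃ δ > 0, ∀ s1 ∈ I, ∀ s2 ∈ I,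
        |s1 - t| < δ → |s2 - t| < δ → s1 ≤ s2 → r s1 ≤ r s2) :
    MonotoneOn r I := by
  intro x hx y hy hxy
  rcases eq_or_lt_of_le hxy with rfl | hlt
  · exact le_rfl
  have hIcc : Icc x y ⊆ I := hIconn.out hx hy
  set S : Set ℝ := {t ∈ Icc x y | r x ≤ r t} with hS
  have hxS : x ∈ S := ⟨⟨le_rfl, hxy⟩, le_rfl⟩
  have hSne : S.Nonempty := ⟨x, hxS⟩
  have hSbdd : BddAbove S := ⟨y, fun t ht => ht.1.2⟩
  set m := sSup S with hm
  have hmIcc : m ∈ Icc x y :=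
    ⟨le_csSup hSbdd hxS, csSup_le hSne fun t ht => ht.1.2⟩
  have hmI : m ∈ I := hIcc hmIcc
  have hmS : r x ≤ r m := by
    have hmc : m ∈ closure S := csSup_mem_closure hSne hSbdd
    have hnb : (𝓝[S] m).NeBot := mem_closure_iff_nhdsWithin_neBot.mp hmc
    have hcw : Tendsto r (𝓝[S] m) (𝓝 (r m)) :=
      ((hrc.continuousWithinAt hmI).mono (fun t ht => hIcc ht.1))
    exact ge_of_tendsto hcw (eventually_nhdsWithin_of_forall fun t ht => ht.2)
  rcases eq_or_lt_of_le hmIcc.2 with hmy | hmy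
  · rw [← hmy]; exact hmS
  · exfalso
    obtain ⟨δ, hδ, hδp⟩ := h m hmI
    set s2 := min y (m + δ / 2) with hs2
    have hms2 : m < s2 := lt_min hmy (by linarith)
    have hs2Icc : s2 ∈ Icc x y := ⟨hmIcc.1.trans hms2.le, min_le_left _ _⟩
    have hs2I : s2 ∈ I := hIcc hs2Icc
    have hs2le : s2 ≤ m + δ / 2 := min_le_right _ _
    have hd2 : |s2 - m| < δ := by
      rw [abs_lt]; constructor <;> linarith
    have : r m ≤ r s2 := hδp m hmI s2 hs2I (by simp [hδ]) hd2 hms2.le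
    have hs2S : s2 ∈ S := ⟨hs2Icc, hmS.trans this⟩
    exact absurd (le_csSup hSbdd hs2S) (not_le.mpr hms2)

lemma sum_update_pt {n : ℕ} (p : Fin n → ℝ → ℝ) (j : Fin n) (s t : ℝ) :
    ∑ i, p i (Function.update (fun _ : Fin n => t) j s i)
      = p j s + ∑ i ∈ Finset.univ.erase j, p i t := by
  rw [← Finset.add_sum_erase Finset.univ
    (fun i => p i (Function.update (fun _ : Fin n => t) j s i)) (Finset.mem_univ j)]
  congr 1
  · rw [Function.update_self]
  · exact Finset.sum_congr rfl fun i hi => by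
      rw [Function.update_of_ne (Finset.ne_of_mem_erase hi)]

lemma sum_update_mul {n : ℕ} (p : Fin n → ℝ → ℝ) (f : ℝ → ℝ) (j : Fin n) (s t : ℝ) :
    ∑ i, p i (Function.update (fun _ : Fin n => t) j s i)
        * f (Function.update (fun _ : Fin n => t) j s i)
      = p j s * f s + (∑ i ∈ Finset.univ.erase j, p i t) * f t := by
  rw [← Finset.add_sum_erase Finset.univ
    (fun i => p i (Function.update (fun _ : Fin n => t) j s i)
      * f (Function.update (fun _ : Fin n => t) j s i)) (Finset.mem_univ j),
    Finset.sum_mul]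
  congr 1
  · rw [Function.update_self]
  · exact Finset.sum_congr rfl fun i hi => by
      rw [Function.update_of_ne (Finset.ne_of_mem_erase hi)]


/-- Theorem 4: for a strictly monotone twice continuously differentiable `f` with
nonvanishing first derivative and continuous `p, q : I → ℝ₊ⁿ`, the conditions
(i) `A_{f,p}` globally smaller than `A_{f,q}`, (ii) `A_{f,p}` locally smaller than
`A_{f,q}`, (iii) `pᵢ/p₀ = qᵢ/q₀` on `I` for all `i` and `q₀/p₀` increasing on `I`,
are pairwise equivalent. -/
theorem stmt17 {n : ℕ} (hn : 2 ≤ n) (I : Set ℝ) (hIopen : IsOpen I)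
    (hIconn : I.OrdConnected) (hIne : I.Nonempty)
    (f f' f'' : ℝ → ℝ) (p q : Fin n → ℝ → ℝ)
    (hfmono : StrictMonoOn f I ∨ StrictAntiOn f I)
    (hf : ∀ x ∈ I, HasDerivAt f (f' x) x) (hf2 : ∀ x ∈ I, HasDerivAt f' (f'' x) x)
    (hf2c : ContinuousOn f'' I) (hf'0 : ∀ x ∈ I, f' x ≠ 0)
    (hp : ∀ i, ∀ x ∈ I, 0 < p i x) (hq : ∀ i, ∀ x ∈ I, 0 < q i x)
    (hpc : ∀ i, ContinuousOn (p i) I) (hqc : ∀ i, ContinuousOn (q i) I) :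
    List.TFAE
      [∀ x : Fin n → ℝ, (∀ i, x i ∈ I) → bajMean I f p x ≤ bajMean I f q x,
       LocallySmaller I (bajMean I f p) (bajMean I f q),
       (∀ i : Fin n, ∀ x ∈ I, p i x / (∑ j, p j x) = q i x / (∑ j, q j x)) ∧
         MonotoneOn (fun x => (∑ j, q j x) / (∑ j, p j x)) I] := by
  classical
  have hn0 : 0 < n := by omega
  have hfc : ContinuousOn f I := fun x hx => (hf x hx).continuousAt.continuousWithinAt
  have hne : (Finset.univ : Finset (Fin n)).Nonempty := by
    simpa [Finset.univ_nonempty_iff, Fin.pos_iff_nonempty] using hn0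
  have hp0 : ∀ y ∈ I, (0:ℝ) < ∑ j, p j y :=
    fun y hy => Finset.sum_pos (fun i _ => hp i y hy) hne
  have hq0 : ∀ y ∈ I, (0:ℝ) < ∑ j, q j y :=
    fun y hy => Finset.sum_pos (fun i _ => hq i y hy) hne
  obtain ⟨ε, hε1, hεf⟩ : ∃ ε : ℝ, (ε = 1 ∨ ε = -1) ∧
      ∀ a ∈ I, ∀ b ∈ I, a < b → ε * f a < ε * f b := by
    rcases hfmono with hmono | hanti
    · exact ⟨1, Or.inl rfl, fun a ha b hb hab => by simpa using hmono ha hb hab⟩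
    · exact ⟨-1, Or.inr rfl, fun a ha b hb hab => by
        simpa using neg_lt_neg (hanti ha hb hab)⟩
  have hεne : ε ≠ 0 := by rcases hε1 with rfl | rfl <;> norm_num
  tfae_have 3 → 1 := by
    rintro ⟨hr, hmono⟩ x hx
    set R : ℝ → ℝ := fun y => (∑ j, q j y) / (∑ j, p j y) with hR
    have hqR : ∀ i, ∀ y, y ∈ I → q i y = R y * p i y := by
      intro i y hy
      have h1 := hr i y hy
      have h2 : p i y * (∑ j, q j y) = q i y * (∑ j, p j y) :=
        (div_eq_div_iff (hp0 y hy).ne' (hq0 y hy).ne').mp h1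
      rw [hR]
      rw [eq_comm, div_mul_eq_mul_div, div_eq_iff (hp0 y hy).ne']
      linarith
    have hRpos : ∀ y ∈ I, 0 < R y := fun y hy => div_pos (hq0 y hy) (hp0 y hy)
    have hsq : (∑ i, q i (x i) * f (x i))
        = ∑ i, p i (x i) * R (x i) * (ε * f (x i)) * ε := by
      refine Finset.sum_congr rfl fun i _ => ?_
      rw [hqR i _ (hx i)]
      rcases hε1 with rfl | rfl <;> ring
    have hsq0 : (∑ i, q i (x i)) = ∑ i, p i (x i) * R (x i) := by
      refine Finset.sum_congr rfl fun i _ => ?_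
      rw [hqR i _ (hx i)]; ring
    have hmonov : ∀ i j, 0 ≤ (ε * f (x i) - ε * f (x j)) * (R (x i) - R (x j)) := by
      intro i j
      rcases le_or_gt (x i) (x j) with hij | hij
      · have h1 : R (x i) ≤ R (x j) := hmono (hx i) (hx j) hij
        have h2 : ε * f (x i) ≤ ε * f (x j) := by
          rcases eq_or_lt_of_le hij with he | hl
          · rw [he]
          · exact (hεf _ (hx i) _ (hx j) hl).le
        nlinarith
      · have h1 : R (x j) ≤ R (x i) := hmono (hx j) (hx i) hij.le
        have h2 : ε * f (x j) ≤ ε * f (x i) := (hεf _ (hx j) _ (hx i) hij).le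
        nlinarith
    have hcheb := cheb_le hn0 (fun i => p i (x i)) (fun i => ε * f (x i))
      (fun i => R (x i)) (fun i => hp i _ (hx i)) (fun i => hRpos _ (hx i))
      (fun i j => hmonov i j)
    obtain ⟨hMI, hMf⟩ := bajMean_spec hn0 hIconn hfc hp hx
    obtain ⟨hNI, hNf⟩ := bajMean_spec hn0 hIconn hfc hq hx
    -- rewrite cheb into ε * cp ≤ ε * cq
    have e1 : (∑ i, p i (x i) * (ε * f (x i))) = ε * ∑ i, p i (x i) * f (x i) := by
      rw [Finset.mul_sum]; exact Finset.sum_congr rfl fun i _ => by ring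
    have e2 : (∑ i, p i (x i) * R (x i) * (ε * f (x i)))
        = ε * ∑ i, q i (x i) * f (x i) := by
      rw [hsq, Finset.mul_sum]
      refine Finset.sum_congr rfl fun i _ => ?_
      rcases hε1 with rfl | rfl <;> ring
    rw [e1, e2, ← hsq0] at hcheb
    have hkey : ε * f (bajMean I f p x) ≤ ε * f (bajMean I f q x) := by
      rw [hMf, hNf]
      calc ε * ((∑ i, p i (x i) * f (x i)) / (∑ i, p i (x i)))
          = ε * (∑ i, p i (x i) * f (x i)) / (∑ i, p i (x i)) := by ring
        _ ≤ ε * (∑ i, q i (x i) * f (x i)) / (∑ i, q i (x i)) := hcheb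
        _ = ε * ((∑ i, q i (x i) * f (x i)) / (∑ i, q i (x i))) := by ring
    by_contra hcon
    push_neg at hcon
    exact absurd (hεf _ hNI _ hMI hcon) (not_lt.mpr hkey)
  tfae_have 1 → 2 := by
    intro h1
    refine ⟨{x | ∀ i, x i ∈ I}, ?_, le_refl _, fun x hx i => hx, fun x hx => h1 x hx⟩
    have : {x : Fin n → ℝ | ∀ i, x i ∈ I} = Set.pi Set.univ (fun _ => I) := by
      ext x; simp [Set.mem_pi]
    rw [this]
    exact isOpen_set_pi Set.finite_univ (fun i _ => hIopen)
  tfae_have 2 → 3 := by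
    rintro ⟨U, hUopen, hUI, hUdiag, hUle⟩
    have hsign : ∀ x, x ∈ U → ε * ((∑ i, p i (x i) * f (x i)) / (∑ i, p i (x i)))
        ≤ ε * ((∑ i, q i (x i) * f (x i)) / (∑ i, q i (x i))) := by
      intro x hxU
      have hx : ∀ i, x i ∈ I := hUI hxU
      obtain ⟨hMI, hMf⟩ := bajMean_spec hn0 hIconn hfc hp hx
      obtain ⟨hNI, hNf⟩ := bajMean_spec hn0 hIconn hfc hq hx
      rw [← hMf, ← hNf]
      rcases eq_or_lt_of_le (hUle x hxU) with he | hlt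
      · rw [he]
      · exact (hεf _ hMI _ hNI hlt).le
    -- Part A: the ratio equality
    have key : ∀ j : Fin n, ∀ t ∈ I, q j t * (∑ i, p i t) = p j t * (∑ i, q i t) := by
      intro j t ht
      set P' := ∑ i ∈ Finset.univ.erase j, p i t with hP'
      set Q' := ∑ i ∈ Finset.univ.erase j, q i t with hQ'
      have hP'0 : 0 ≤ P' := Finset.sum_nonneg fun i _ => (hp i t ht).le
      have hQ'0 : 0 ≤ Q' := Finset.sum_nonneg fun i _ => (hq i t ht).le
      have hp0t : p j t + P' = ∑ i, p i t := by
        rw [hP']; exact Finset.add_sum_erase Finset.univ (fun i => p i t) (Finset.mem_univ j)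
      have hq0t : q j t + Q' = ∑ i, q i t := by
        rw [hQ']; exact Finset.add_sum_erase Finset.univ (fun i => q i t) (Finset.mem_univ j)
      set h : ℝ → ℝ := fun s =>
        q j s * (f s - f t) / (q j s + Q') - p j s * (f s - f t) / (p j s + P') with hh
      have hht : h t = 0 := by rw [hh]; simp
      have hslope : ∀ s : ℝ, slope h t s
          = (q j s / (q j s + Q') - p j s / (p j s + P')) * slope f t s := by
        intro s
        rw [slope_def_field, slope_def_field, hht, sub_zero, hh]
        simp only
        rw [sub_div, div_div, div_div, mul_div_mul_comm, mul_div_mul_comm, ← sub_mul]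
      have hqden : q j t + Q' ≠ 0 := by rw [hq0t]; exact (hq0 t ht).ne'
      have hpden : p j t + P' ≠ 0 := by rw [hp0t]; exact (hp0 t ht).ne'
      have hcq : ContinuousAt (fun s => q j s / (q j s + Q')) t := by
        have hc := (hqc j).continuousAt (hIopen.mem_nhds ht)
        exact hc.div (hc.add continuousAt_const) hqden
      have hcp : ContinuousAt (fun s => p j s / (p j s + P')) t := by
        have hc := (hpc j).continuousAt (hIopen.mem_nhds ht)
        exact hc.div (hc.add continuousAt_const) hpden
      have hslopef := hasDerivAt_iff_tendsto_slope.mp (hf t ht)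
      have hL : Tendsto (slope h t) (𝓝[≠] t)
          (𝓝 ((q j t / (q j t + Q') - p j t / (p j t + P')) * f' t)) := by
        refine Tendsto.congr (fun s => (hslope s).symm) ?_
        exact (((hcq.sub hcp).tendsto.mono_left nhdsWithin_le_nhds)).mul hslopef
      have hdh : HasDerivAt h
          ((q j t / (q j t + Q') - p j t / (p j t + P')) * f' t) t :=
        hasDerivAt_iff_tendsto_slope.mpr hL
      have hyU : ∀ᶠ s in 𝓝 t, Function.update (fun _ : Fin n => t) j s ∈ U := by
        have hcont : Continuous fun s : ℝ => Function.update (fun _ : Fin n => t) j s :=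
          continuous_const.update j continuous_id
        have hmem : Function.update (fun _ : Fin n => t) j t ∈ U := by
          rw [Function.update_eq_self j (fun _ : Fin n => t)]
          exact hUdiag t ht
        exact hcont.continuousAt.eventually_mem (hUopen.mem_nhds hmem)
      have hev : ∀ᶠ s in 𝓝 t, 0 ≤ ε * h s := by
        filter_upwards [hyU, hIopen.mem_nhds ht] with s hsU hsI
        have hdp : p j s + P' ≠ 0 := (add_pos_of_pos_of_nonneg (hp j s hsI) hP'0).ne'
        have hdq : q j s + Q' ≠ 0 := (add_pos_of_pos_of_nonneg (hq j s hsI) hQ'0).ne'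
        have ecp : (∑ i, p i (Function.update (fun _ : Fin n => t) j s i)
              * f (Function.update (fun _ : Fin n => t) j s i))
              / (∑ i, p i (Function.update (fun _ : Fin n => t) j s i))
            = f t + p j s * (f s - f t) / (p j s + P') := by
          rw [sum_update_mul p f j s t, sum_update_pt p j s t, ← hP']
          field_simp
          ring
        have ecq : (∑ i, q i (Function.update (fun _ : Fin n => t) j s i)
              * f (Function.update (fun _ : Fin n => t) j s i))
              / (∑ i, q i (Function.update (fun _ : Fin n => t) j s i))
            = f t + q j s * (f s - f t) / (q j s + Q') := by
          rw [sum_update_mul q f j s t, sum_update_pt q j s t, ← hQ']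
          field_simp
          ring
        have hs := hsign _ hsU
        rw [ecp, ecq] at hs
        have hgoal : h s = q j s * (f s - f t) / (q j s + Q')
            - p j s * (f s - f t) / (p j s + P') := by rw [hh]
        rw [hgoal]
        nlinarith [hs]
      have hmin : IsLocalMin (fun s => ε * h s) t := by
        refine hev.mono fun s hs => ?_
        simpa [hht] using hs
      have hder0 : deriv (fun s => ε * h s) t = 0 := hmin.deriv_eq_zero
      have hderval : deriv (fun s => ε * h s) t
          = ε * ((q j t / (q j t + Q') - p j t / (p j t + P')) * f' t) :=
        (hdh.const_mul ε).deriv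
      have h3 : q j t / (q j t + Q') - p j t / (p j t + P') = 0 := by
        rw [hder0] at hderval
        rcases mul_eq_zero.mp hderval.symm with hc | hc
        · exact absurd hc hεne
        · rcases mul_eq_zero.mp hc with hc' | hc'
          · exact hc'
          · exact absurd hc' (hf'0 t ht)
      have h4 := sub_eq_zero.mp h3
      rw [div_eq_div_iff hqden hpden] at h4
      rw [← hp0t, ← hq0t]; linarith
    -- Part B: q₀/p₀ is locally increasing
    set R : ℝ → ℝ := fun y => (∑ k, q k y) / (∑ k, p k y) with hR
    have hRval : ∀ y, R y = (∑ k, q k y) / (∑ k, p k y) := fun y => by rw [hR]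
    have hRI : ∀ i, ∀ y ∈ I, q i y = R y * p i y := by
      intro i y hy
      rw [hRval, div_mul_eq_mul_div, eq_div_iff (hp0 y hy).ne']
      linarith [key i y hy]
    have hRpos : ∀ y ∈ I, 0 < R y := fun y hy => div_pos (hq0 y hy) (hp0 y hy)
    have hRc : ContinuousOn R I := by
      apply ContinuousOn.div
      · exact continuousOn_finset_sum _ fun i _ => hqc i
      · exact continuousOn_finset_sum _ fun i _ => hpc i
      · exact fun y hy => (hp0 y hy).ne'
    have hlocal : ∀ t ∈ I, ∃ δ > 0, ∀ s1 ∈ I, ∀ s2 ∈ I,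
        |s1 - t| < δ → |s2 - t| < δ → s1 ≤ s2 → R s1 ≤ R s2 := by
      intro t ht
      set j : Fin n := ⟨0, by omega⟩ with hj
      set k : Fin n := ⟨1, by omega⟩ with hk
      have hkj : k ≠ j := by simp [hj, hk, Fin.ext_iff]
      have hFcont : Continuous fun z : ℝ × ℝ =>
          Function.update (fun _ : Fin n => z.2) j z.1 :=
        (continuous_pi fun _ => continuous_snd).update j continuous_fst
      have hmem : (fun z : ℝ × ℝ =>
          Function.update (fun _ : Fin n => z.2) j z.1) (t, t) ∈ U := by
        show Function.update (fun _ : Fin n => t) j t ∈ U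
        rw [Function.update_eq_self j (fun _ : Fin n => t)]
        exact hUdiag t ht
      have hev : ∀ᶠ z : ℝ × ℝ in 𝓝 (t, t),
          Function.update (fun _ : Fin n => z.2) j z.1 ∈ U :=
        hFcont.continuousAt.eventually_mem (hUopen.mem_nhds hmem)
      rw [Metric.eventually_nhds_iff] at hev
      obtain ⟨δ, hδ0, hδ⟩ := hev
      refine ⟨δ, hδ0, ?_⟩
      intro s1 hs1 s2 hs2 hd1 hd2 hle
      rcases eq_or_lt_of_le hle with rfl | hlt
      · exact le_rfl
      have hzU : Function.update (fun _ : Fin n => s2) j s1 ∈ U := by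
        have hdist : dist ((s1, s2) : ℝ × ℝ) ((t, t) : ℝ × ℝ) < δ := by
          rw [Prod.dist_eq]
          exact max_lt (by rwa [Real.dist_eq]) (by rwa [Real.dist_eq])
        exact hδ hdist
      set P2 := ∑ i ∈ Finset.univ.erase j, p i s2 with hP2
      have hP2pos : 0 < P2 := Finset.sum_pos (fun i _ => hp i s2 hs2)
        ⟨k, Finset.mem_erase.mpr ⟨hkj, Finset.mem_univ k⟩⟩
      have hw1 : 0 < p j s1 := hp j s1 hs1
      have eq1 : (∑ i ∈ Finset.univ.erase j, q i s2) = R s2 * P2 := by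
        rw [hP2, Finset.mul_sum]
        exact Finset.sum_congr rfl fun i _ => hRI i s2 hs2
      have ecp : (∑ i, p i (Function.update (fun _ : Fin n => s2) j s1 i)
            * f (Function.update (fun _ : Fin n => s2) j s1 i))
            / (∑ i, p i (Function.update (fun _ : Fin n => s2) j s1 i))
          = (p j s1 * f s1 + P2 * f s2) / (p j s1 + P2) := by
        rw [sum_update_mul p f j s1 s2, sum_update_pt p j s1 s2, ← hP2]
      have ecq : (∑ i, q i (Function.update (fun _ : Fin n => s2) j s1 i)
            * f (Function.update (fun _ : Fin n => s2) j s1 i))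
            / (∑ i, q i (Function.update (fun _ : Fin n => s2) j s1 i))
          = (R s1 * p j s1 * f s1 + R s2 * P2 * f s2)
            / (R s1 * p j s1 + R s2 * P2) := by
        rw [sum_update_mul q f j s1 s2, sum_update_pt q j s1 s2, eq1,
          hRI j s1 hs1]
      have hs := hsign _ hzU
      rw [ecp, ecq] at hs
      have hDp : 0 < p j s1 + P2 := by linarith
      have hDq : 0 < R s1 * p j s1 + R s2 * P2 := by
        have h1 := hRpos s1 hs1
        have h2 := hRpos s2 hs2
        have := mul_pos h1 hw1
        have := mul_pos h2 hP2pos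
        linarith
      have hfs : ε * f s1 < ε * f s2 := hεf s1 hs1 s2 hs2 hlt
      have hid : ε * ((R s1 * p j s1 * f s1 + R s2 * P2 * f s2)
            / (R s1 * p j s1 + R s2 * P2))
          - ε * ((p j s1 * f s1 + P2 * f s2) / (p j s1 + P2))
          = (p j s1 * P2 * ((R s1 - R s2) * (ε * f s1 - ε * f s2)))
            / ((R s1 * p j s1 + R s2 * P2) * (p j s1 + P2)) := by
        field_simp
        ring
      by_contra hcon
      push_neg at hcon
      have hA : (p j s1 * P2 * ((R s1 - R s2) * (ε * f s1 - ε * f s2))) < 0 :=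
        mul_neg_of_pos_of_neg (mul_pos hw1 hP2pos)
          (mul_neg_of_pos_of_neg (by linarith) (by linarith))
      have hneg := div_neg_of_neg_of_pos hA (mul_pos hDq hDp)
      linarith
    have hRmono : MonotoneOn R I := mono_of_local hIconn hRc hlocal
    refine ⟨fun i x hx => ?_, hRmono⟩
    rw [div_eq_div_iff (hp0 x hx).ne' (hq0 x hx).ne']
    linarith [key i x hx]
  tfae_finish
end

section
/- Let I ⊆ (0,∞) be a nonempty open interval, n ≥ 2, λ_1,…,λ_n, μ_1,…,μ_n > 0, α_1,…,α_n, β_1,…,β_n ∈ ℝ, and a, b ∈ ℝ. Define p_i(x) := λ_i x^{α_i}, q_i(x) := μ_i x^{β_i}, and define f(x) := x^a if a ≠ 0 and f(x) := log x if a = 0, g(x) := x^b if b ≠ 0 and g(x) := log x if b = 0. Assume that there exist γ > 0 and δ ∈ ℝ such that μ_i = γ λ_i and β_i = α_i + δ for all i ∈ {1,…,n}, and that min(a,0) ≤ δ + min(b,0) and max(a,0) ≤ δ + max(b,0). Then A_{f,p} is globally smaller than A_{g,q}, i.e., A_{f,p}(x_1,…,x_n) ≤ A_{g,q}(x_1,…,x_n)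 for all x_1,…,x_n ∈ I. -/
open Set Function Real

noncomputable def expm1Div (c u : ℝ) : ℝ := if c = 0 then u else (exp (c * u) - 1) / c

theorem hasDerivAt_expm1Div (c u : ℝ) : HasDerivAt (expm1Div c) (exp (c * u)) u := by
  by_cases hc : c = 0
  · subst hc
    have h : expm1Div 0 = id := funext fun u => by simp [expm1Div]
    simpa [h] using hasDerivAt_id u
  · have h := (((hasDerivAt_id u).const_mul c).exp.sub_const 1).div_const c
    rw [show expm1Div c = fun u => (exp (c * u) - 1) / c from funext fun u => if_neg hc]
    exact h.congr_deriv (by simp [hc])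

theorem strictMono_expm1Div (c : ℝ) : StrictMono (expm1Div c) :=
  strictMono_of_hasDerivAt_pos (hasDerivAt_expm1Div c) fun _ => exp_pos _

theorem integral_mul_exp_linear (u p r : ℝ) :
    ∫ s in (0 : ℝ)..1, u * exp (u * (p + s * r)) = exp (u * p) * expm1Div r u := by
  have hderiv : ∀ s ∈ uIcc (0 : ℝ) 1, HasDerivAt (fun s => exp (u * p) * expm1Div r (u * s))
      (u * exp (u * (p + s * r))) s := fun s _ => by
    refine (((hasDerivAt_expm1Div r (u * s)).comp s
      ((hasDerivAt_id s).const_mul u)).const_mul (exp (u * p))).congr_deriv ?_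
    rw [show u * (p + s * r) = u * p + r * (u * s) by ring, exp_add]
    ring
  rw [intervalIntegral.integral_eq_sub_of_hasDerivAt hderiv
    ((by fun_prop : Continuous fun s => u * exp (u * (p + s * r))).intervalIntegrable 0 1)]
  simp [expm1Div]

theorem expm1Div_eq_exp_mul_expm1Div (c u : ℝ) :
    expm1Div c u = exp (u * min c 0) * expm1Div (max c 0 - min c 0) u := by
  rcases le_or_gt 0 c with hc | hc
  · simp [min_eq_right hc, max_eq_left hc]
  · rw [min_eq_left hc.le, max_eq_right hc.le]
    simp only [expm1Div, hc.ne, zero_sub, neg_eq_zero, if_false]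
    rw [show -c * u = -(u * c) by ring, exp_neg, mul_comm c u]
    field_simp
    ring

theorem monotone_mul_exp_mul (u : ℝ) : Monotone fun t => u * exp (u * t) := by
  intro t t' h
  rcases le_total 0 u with hu | hu
  · exact mul_le_mul_of_nonneg_left (exp_le_exp.2 (mul_le_mul_of_nonneg_left h hu)) hu
  · exact mul_le_mul_of_nonpos_left (exp_le_exp.2 (mul_le_mul_of_nonpos_left h hu)) hu

theorem expm1Div_le_exp_mul_expm1Div {a b δ : ℝ} (hmin : min a 0 ≤ δ + min b 0)
    (hmax : max a 0 ≤ δ + max b 0) (u : ℝ) :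
    expm1Div a u ≤ exp (δ * u) * expm1Div b u := by
  have hint : ∀ p r : ℝ, IntervalIntegrable (fun s => u * exp (u * (p + s * r)))
      MeasureTheory.volume 0 1 := fun p r => (by fun_prop : Continuous _).intervalIntegrable 0 1
  calc expm1Div a u
      = ∫ s in (0 : ℝ)..1, u * exp (u * (min a 0 + s * (max a 0 - min a 0))) := by
        rw [integral_mul_exp_linear, ← expm1Div_eq_exp_mul_expm1Div]
    _ ≤ ∫ s in (0 : ℝ)..1, u * exp (u * ((δ + min b 0) + s * (max b 0 - min b 0))) :=
        intervalIntegral.integral_mono_on zero_le_one (hint _ _) (hint _ _) fun s hs =>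
          monotone_mul_exp_mul u (by nlinarith [hs.1, hs.2])
    _ = exp (δ * u) * expm1Div b u := by
        rw [integral_mul_exp_linear, mul_add, exp_add, mul_assoc,
          ← expm1Div_eq_exp_mul_expm1Div, mul_comm u δ]

theorem weighted_mean_mem_image {n : ℕ} (hn : 0 < n) {I : Set ℝ} (hI : I.OrdConnected)
    {f : ℝ → ℝ} (hf : ContinuousOn f I) {w x : Fin n → ℝ} (hw : ∀ i, 0 < w i)
    (hx : ∀ i, x i ∈ I) : (∑ i, w i * f (x i)) / ∑ i, w i ∈ f '' I := by
  have : Nonempty (Fin n) := ⟨⟨0, hn⟩⟩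
  have hconv : Convex ℝ (f '' I) :=
    ((hI.isPreconnected.image f hf).ordConnected).convex
  have h := hconv.centerMass_mem (t := Finset.univ) (fun i _ => (hw i).le)
    (Finset.sum_pos (fun i _ => hw i) Finset.univ_nonempty) fun i _ => mem_image_of_mem f (hx i)
  rwa [Finset.centerMass, smul_eq_mul, inv_mul_eq_div] at h

theorem bajMean_mem_and_sum_eq_zero {n : ℕ} (hn : 0 < n) {I : Set ℝ} (hI : I.OrdConnected)
    {f : ℝ → ℝ} (hf : ContinuousOn f I) {p : Fin n → ℝ → ℝ} {x : Fin n → ℝ}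
    (hp : ∀ i, 0 < p i (x i)) (hx : ∀ i, x i ∈ I) :
    bajMean I f p x ∈ I ∧ ∑ i, p i (x i) * (f (x i) - f (bajMean I f p x)) = 0 := by
  have hmem := weighted_mean_mem_image hn hI hf hp hx
  have : Nonempty (Fin n) := ⟨⟨0, hn⟩⟩
  have hsum : (∑ i, p i (x i)) ≠ 0 := (Finset.sum_pos (fun i _ => hp i) Finset.univ_nonempty).ne'
  refine ⟨invFunOn_mem hmem, ?_⟩
  simp only [mul_sub, Finset.sum_sub_distrib, ← Finset.sum_mul, bajMean, invFunOn_eq hmem]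
  field_simp
  ring

noncomputable def powLog (c y : ℝ) : ℝ := if c = 0 then log y else y ^ c

theorem continuousOn_powLog (c : ℝ) : ContinuousOn (powLog c) (Ioi 0) := by
  by_cases hc : c = 0
  · rw [show powLog c = log from funext fun y => if_pos hc]
    exact continuousOn_log.mono fun y hy => ne_of_gt hy
  · rw [show powLog c = (· ^ c) from funext fun y => if_neg hc]
    exact fun y hy => (continuousAt_rpow_const y c (Or.inl (ne_of_gt hy))).continuousWithinAt

theorem exists_powLog_sub_eq_mul_expm1Div (c : ℝ) {A : ℝ} (hA : 0 < A) :
    ∃ κ ≠ 0, ∀ y, 0 < y → powLog c y - powLog c A = κ * expm1Div c (log y - log A) := by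
  by_cases hc : c = 0
  · exact ⟨1, one_ne_zero, fun y _ => by simp [powLog, expm1Div, hc]⟩
  · refine ⟨c * A ^ c, mul_ne_zero hc (rpow_pos_of_pos hA c).ne', fun y hy => ?_⟩
    simp only [powLog, expm1Div, hc, if_false, rpow_def_of_pos hy, rpow_def_of_pos hA]
    rw [mul_sub, exp_sub, mul_comm c, mul_comm c]
    field_simp

theorem bajMean_powLog_mem_and_sum_eq_zero {n : ℕ} (hn : 0 < n) {I : Set ℝ}
    (hI : I.OrdConnected) (hIpos : I ⊆ Ioi 0) (c : ℝ) {p : Fin n → ℝ → ℝ} {x : Fin n → ℝ}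
    (hp : ∀ i, 0 < p i (x i)) (hx : ∀ i, x i ∈ I) :
    bajMean I (powLog c) p x ∈ I ∧
      ∑ i, p i (x i) * expm1Div c (log (x i) - log (bajMean I (powLog c) p x)) = 0 := by
  obtain ⟨hM, hsum⟩ :=
    bajMean_mem_and_sum_eq_zero hn hI ((continuousOn_powLog c).mono hIpos) hp hx
  obtain ⟨κ, hκ, hdiff⟩ := exists_powLog_sub_eq_mul_expm1Div c (hIpos hM)
  refine ⟨hM, ?_⟩
  simp only [hdiff _ (hIpos (hx _)), mul_left_comm _ κ, ← Finset.mul_sum] at hsum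
  exact (mul_eq_zero.1 hsum).resolve_left hκ

theorem strictAntiOn_sum_mul_expm1Div {n : ℕ} (hn : 0 < n) (c : ℝ) {v x : Fin n → ℝ}
    (hv : ∀ i, 0 < v i) :
    StrictAntiOn (fun t => ∑ i, v i * expm1Div c (log (x i) - log t)) (Ioi 0) := by
  have : Nonempty (Fin n) := ⟨⟨0, hn⟩⟩
  intro t ht t' _ htt'
  refine Finset.sum_lt_sum_of_nonempty Finset.univ_nonempty fun i _ =>
    mul_lt_mul_of_pos_left (strictMono_expm1Div c ?_) (hv i)
  exact sub_lt_sub_left (log_lt_log ht htt') _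

theorem bajMean_powLog_le_bajMean_powLog {n : ℕ} (hn : 0 < n) {I : Set ℝ}
    (hI : I.OrdConnected) (hIpos : I ⊆ Ioi 0) {a b δ γ : ℝ} (hγ : 0 < γ)
    (hmin : min a 0 ≤ δ + min b 0) (hmax : max a 0 ≤ δ + max b 0)
    {p q : Fin n → ℝ → ℝ} {x : Fin n → ℝ} (hp : ∀ i, 0 < p i (x i))
    (hq : ∀ i, q i (x i) = γ * (p i (x i) * x i ^ δ)) (hx : ∀ i, x i ∈ I) :
    bajMean I (powLog a) p x ≤ bajMean I (powLog b) q x := by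
  have hxpos : ∀ i, 0 < x i := fun i => hIpos (hx i)
  have hqpos : ∀ i, 0 < q i (x i) := fun i => by
    rw [hq]; exact mul_pos hγ (mul_pos (hp i) (rpow_pos_of_pos (hxpos i) δ))
  obtain ⟨hA, hA0⟩ := bajMean_powLog_mem_and_sum_eq_zero hn hI hIpos a hp hx
  obtain ⟨hB, hB0⟩ := bajMean_powLog_mem_and_sum_eq_zero hn hI hIpos b hqpos hx
  set A := bajMean I (powLog a) p x
  have hApos : 0 < A := hIpos hA
  have hrpow : ∀ i, x i ^ δ = A ^ δ * exp (δ * (log (x i) - log A)) := fun i => by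
    rw [rpow_def_of_pos (hxpos i), rpow_def_of_pos hApos, ← exp_add]
    ring_nf
  refine ((strictAntiOn_sum_mul_expm1Div hn b (x := x) hqpos).le_iff_ge (hIpos hB) hApos).1 ?_
  rw [hB0]
  calc (0 : ℝ) = γ * A ^ δ * ∑ i, p i (x i) * expm1Div a (log (x i) - log A) := by
        rw [hA0, mul_zero]
    _ ≤ γ * A ^ δ * ∑ i, p i (x i) * (exp (δ * (log (x i) - log A)) *
          expm1Div b (log (x i) - log A)) := by
        gcongr with i
        · exact (hp i).le
        · exact expm1Div_le_exp_mul_expm1Div hmin hmax _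
    _ = ∑ i, q i (x i) * expm1Div b (log (x i) - log A) := by
        rw [Finset.mul_sum]
        refine Finset.sum_congr rfl fun i _ => ?_
        rw [hq, hrpow]
        ring

theorem stmt19_general {n : ℕ} (hn : 2 ≤ n) (I : Set ℝ)
    (hIconn : I.OrdConnected) (hIpos : I ⊆ Set.Ioi (0 : ℝ))
    (a b : ℝ)
    (lam mu : Fin n → ℝ) (al be : Fin n → ℝ)
    (hlam : ∀ i, 0 < lam i)
    (γ δ : ℝ) (hγ : 0 < γ)
    (hrel : ∀ i : Fin n, mu i = γ * lam i ∧ be i = al i + δ)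
    (hmin : min a 0 ≤ δ + min b 0) (hmax : max a 0 ≤ δ + max b 0) :
    ∀ x : Fin n → ℝ, (∀ i, x i ∈ I) →
      bajMean I (fun y => if a = 0 then Real.log y else y ^ a)
          (fun i y => lam i * y ^ al i) x ≤
        bajMean I (fun y => if b = 0 then Real.log y else y ^ b)
          (fun i y => mu i * y ^ be i) x := by
  intro x hx
  exact bajMean_powLog_le_bajMean_powLog (by omega) hIconn hIpos hγ hmin hmax
    (fun i => mul_pos (hlam i) (rpow_pos_of_pos (hIpos (hx i)) _))
    (fun i => by rw [(hrel i).1, (hrel i).2, rpow_add (hIpos (hx i))]; ring) hx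

/-- Corollary 3: with power weights `pᵢ(x) = λᵢ x^{αᵢ}`, `qᵢ(x) = μᵢ x^{βᵢ}` on
`I ⊆ (0,∞)` and `f(x) = x^a` (`f = log` if `a = 0`), `g(x) = x^b` (`g = log` if
`b = 0`), if `μᵢ = γλᵢ`, `βᵢ = αᵢ + δ` for all `i` (with `γ > 0`) and
`min(a,0) ≤ δ + min(b,0)`, `max(a,0) ≤ δ + max(b,0)`, then `A_{f,p}` is globally
smaller than `A_{g,q}`. -/
theorem stmt19 {n : ℕ} (hn : 2 ≤ n) (I : Set ℝ) (hIopen : IsOpen I)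
    (hIconn : I.OrdConnected) (hIne : I.Nonempty) (hIpos : I ⊆ Set.Ioi (0 : ℝ))
    (a b : ℝ)
    (lam mu : Fin n → ℝ) (al be : Fin n → ℝ)
    (hlam : ∀ i, 0 < lam i) (hmu : ∀ i, 0 < mu i)
    (γ δ : ℝ) (hγ : 0 < γ)
    (hrel : ∀ i : Fin n, mu i = γ * lam i ∧ be i = al i + δ)
    (hmin : min a 0 ≤ δ + min b 0) (hmax : max a 0 ≤ δ + max b 0) :
    ∀ x : Fin n → ℝ, (∀ i, x i ∈ I) →
      bajMean I (fun y => if a = 0 then Real.log y else y ^ a)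
          (fun i y => lam i * y ^ al i) x ≤
        bajMean I (fun y => if b = 0 then Real.log y else y ^ b)
          (fun i y => mu i * y ^ be i) x :=
  stmt19_general hn I hIconn hIpos a b lam mu al be hlam γ δ hγ hrel hmin hmax
end
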